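/- arXiv:2504.04088 — 3 statements merged into one kernel-verified Lean document; each statement's English description precedes it below -/
import Mathlib

section
/- Let N, N' ≥ 2 and r, r' ∈ (0,1). If log N / log N' is rational, then the symbolic spaces (Ω_N, ρ_r) and (Ω_{N'}, ρ_{r'}) are strictly Hölder equivalent. -/
open Real

/-- Length of the maximal common prefix of two sequences (meaningful when `x ≠ y`). -/
noncomputable def wedge {N : ℕ} (x y : ℕ → Fin N) : ℕ := sInf {n | x n ≠ y n}

open scoped Classical in
/-- The metric `ρ_r` on the symbolic space `Ω_N = {0,…,N-1}^ℕ`. -/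
noncomputable def rho (N : ℕ) (r : ℝ) (x y : ℕ → Fin N) : ℝ :=
  if x = y then 0 else r ^ wedge x y

open scoped Classical in
/-- The metric `ρ_r` for a vector of ratios `r : Fin N → ℝ`:
`ρ_r(x,y)` is the product of the ratios along the maximal common prefix of `x` and `y`. -/
noncomputable def rhoVec {N : ℕ} (r : Fin N → ℝ) (x y : ℕ → Fin N) : ℝ :=
  if x = y then 0 else ∏ i ∈ Finset.range (wedge x y), r (x i)

/-- Strict Hölder equivalence of two distance functions: there are a bijection `f` and
constants `s, C > 0` with `C⁻¹ d(x,y)^s ≤ d'(f x, f y) ≤ C d(x,y)^s`. -/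
def HolderEquivD {X Y : Type*} (dX : X → X → ℝ) (dY : Y → Y → ℝ) : Prop :=
  ∃ f : X → Y, Function.Bijective f ∧ ∃ s C : ℝ, 0 < s ∧ 0 < C ∧
    ∀ a b, C⁻¹ * dX a b ^ s ≤ dY (f a) (f b) ∧ dY (f a) (f b) ≤ C * dX a b ^ s

/-- Lipschitz equivalence of two distance functions. -/
def LipschitzEquivD {X Y : Type*} (dX : X → X → ℝ) (dY : Y → Y → ℝ) : Prop :=
  ∃ f : X → Y, Function.Bijective f ∧ ∃ C : ℝ, 0 < C ∧
    ∀ a b, C⁻¹ * dX a b ≤ dY (f a) (f b) ∧ dY (f a) (f b) ≤ C * dX a b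

/-!
If `log N / log N' = a / b` then `N ^ b = N' ^ a`, so words of length `b` over `N` letters can be
matched bijectively with words of length `a` over `N'` letters. Recoding sequences block by block
along such a matching gives a bijection `Ω_N → Ω_{N'}` which multiplies the length of common
prefixes by `a / b` up to an error of at most `a`. Since `ρ_r = r ^ (common prefix length)`, an
additive error in the prefix length is a multiplicative error in the distance, and the factor `a / b`
becomes the Hölder exponent.
-/

section wedge

variable {N : ℕ} {x y : ℕ → Fin N}

lemma apply_wedge_ne (h : x ≠ y) : x (wedge x y) ≠ y (wedge x y) :=
  Nat.sInf_mem (s := {n | x n ≠ y n}) (Function.ne_iff.mp h)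

lemma eq_of_lt_wedge {i : ℕ} (h : i < wedge x y) : x i = y i := by
  by_contra hne
  exact (Nat.sInf_le hne).not_gt h

lemma wedge_le_of_ne {i : ℕ} (h : x i ≠ y i) : wedge x y ≤ i :=
  Nat.sInf_le h

lemma le_wedge_of_forall_lt {k : ℕ} (hxy : x ≠ y) (h : ∀ i < k, x i = y i) : k ≤ wedge x y :=
  not_lt.mp fun hlt => apply_wedge_ne hxy (h _ hlt)

lemma rho_self (r : ℝ) (x : ℕ → Fin N) : rho N r x x = 0 := if_pos rfl

lemma rho_of_ne (r : ℝ) (h : x ≠ y) : rho N r x y = r ^ wedge x y := if_neg h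

end wedge

lemma holderEquivD_rho_of_abs_sub_wedge_le {N N' : ℕ} {r r' c K : ℝ}
    (hr0 : 0 < r) (hr1 : r < 1) (hr0' : 0 < r') (hr1' : r' < 1) (hc : 0 < c)
    (f : (ℕ → Fin N) → ℕ → Fin N') (hf : Function.Bijective f)
    (hfK : ∀ x y, x ≠ y → |c * wedge x y - wedge (f x) (f y)| ≤ K) :
    HolderEquivD (rho N r) (rho N' r') := by
  have hs : 0 < logb r r' * c := mul_pos (logb_pos_of_base_lt_one hr0 hr1 hr0' hr1') hc
  refine ⟨f, hf, logb r r' * c, r' ^ (-K), hs, rpow_pos_of_pos hr0' _, fun x y => ?_⟩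
  rcases eq_or_ne x y with rfl | hxy
  · simp [rho_self, zero_rpow hs.ne']
  have hpow : (r ^ wedge x y) ^ (logb r r' * c) = r' ^ (c * wedge x y) := by
    rw [← rpow_natCast, ← rpow_mul hr0.le, mul_comm, mul_assoc, rpow_mul hr0.le,
      rpow_logb hr0 hr1.ne hr0']
  obtain ⟨hlow, hupp⟩ := abs_le.mp (hfK x y hxy)
  rw [rho_of_ne r hxy, rho_of_ne r' (hf.1.ne hxy), hpow, ← rpow_natCast r',
    ← rpow_neg hr0'.le, neg_neg, ← rpow_add hr0', ← rpow_add hr0']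
  exact ⟨rpow_le_rpow_of_exponent_ge hr0' hr1'.le (by linarith),
    rpow_le_rpow_of_exponent_ge hr0' hr1'.le (by linarith)⟩

section blockMap

variable {N N' a b : ℕ} {x y : ℕ → Fin N}

/-- Recode a sequence over `Fin N` into one over `Fin N'` by cutting it into blocks of length `b`
and replacing each block by the block of length `a` that `e` assigns to it. -/
noncomputable def blockMap (ha : 0 < a) (e : (Fin b → Fin N) ≃ (Fin a → Fin N'))
    (x : ℕ → Fin N) (n : ℕ) : Fin N' :=
  e (fun i => x (b * (n / a) + i)) ⟨n % a, Nat.mod_lt n ha⟩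

variable (ha : 0 < a) (hb : 0 < b) (e : (Fin b → Fin N) ≃ (Fin a → Fin N'))

lemma blockMap_apply (x : ℕ → Fin N) (k : ℕ) (j : Fin a) :
    blockMap ha e x (a * k + j) = e (fun i => x (b * k + i)) j := by
  have hdiv : (a * k + j) / a = k := by rw [Nat.mul_add_div ha, Nat.div_eq_of_lt j.isLt, add_zero]
  have hmod : (a * k + j) % a = j := by rw [Nat.mul_add_mod, Nat.mod_eq_of_lt j.isLt]
  simp only [blockMap, hdiv, hmod, Fin.eta]

include hb in
lemma blockMap_symm_blockMap (x : ℕ → Fin N) : blockMap hb e.symm (blockMap ha e x) = x := by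
  funext n
  have hblock : (fun j : Fin a => blockMap ha e x (a * (n / b) + j)) =
      e (fun i => x (b * (n / b) + i)) :=
    funext (blockMap_apply ha e x (n / b))
  calc blockMap hb e.symm (blockMap ha e x) n
      = e.symm (e (fun i => x (b * (n / b) + i))) ⟨n % b, Nat.mod_lt n hb⟩ := by
        rw [← hblock]; rfl
    _ = x n := by rw [e.symm_apply_apply, Nat.div_add_mod]

include hb in
lemma blockMap_bijective : Function.Bijective (blockMap ha e) :=
  Function.bijective_iff_has_inverse.mpr ⟨blockMap hb e.symm, blockMap_symm_blockMap ha hb e,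
    fun y => by simpa using blockMap_symm_blockMap hb ha e.symm y⟩

lemma blockMap_apply_eq_of_lt {n : ℕ} (hn : n < a * (wedge x y / b)) :
    blockMap ha e x n = blockMap ha e y n := by
  have hblock : n / a < wedge x y / b := (Nat.div_lt_iff_lt_mul ha).mpr (by linarith)
  have hprefix : b * (n / a + 1) ≤ wedge x y :=
    (Nat.mul_le_mul_left b hblock).trans (Nat.mul_div_le _ _)
  have hagree : (fun i : Fin b => x (b * (n / a) + i)) = fun i : Fin b => y (b * (n / a) + i) :=
    funext fun i => eq_of_lt_wedge (by rw [Nat.mul_succ] at hprefix; omega)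
  simp only [blockMap, hagree]

include hb in
lemma exists_blockMap_apply_ne (hxy : x ≠ y) :
    ∃ j : Fin a,
      blockMap ha e x (a * (wedge x y / b) + j) ≠ blockMap ha e y (a * (wedge x y / b) + j) := by
  have hblock : (fun i : Fin b => x (b * (wedge x y / b) + i)) ≠
      fun i : Fin b => y (b * (wedge x y / b) + i) := fun h => by
    have := congrFun h ⟨wedge x y % b, Nat.mod_lt _ hb⟩
    simp only [Nat.div_add_mod] at this
    exact apply_wedge_ne hxy this
  obtain ⟨j, hj⟩ := Function.ne_iff.mp (e.injective.ne hblock)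
  exact ⟨j, by rwa [blockMap_apply, blockMap_apply]⟩

include hb in
lemma wedge_blockMap_mem_Ico (hxy : x ≠ y) :
    wedge (blockMap ha e x) (blockMap ha e y) ∈
      Set.Ico (a * (wedge x y / b)) (a * (wedge x y / b) + a) := by
  obtain ⟨j, hj⟩ := exists_blockMap_apply_ne ha hb e hxy
  exact ⟨le_wedge_of_forall_lt (fun h => hj (congrFun h _)) fun _ => blockMap_apply_eq_of_lt ha e,
    (wedge_le_of_ne hj).trans_lt (by omega)⟩

include hb in
lemma abs_sub_wedge_blockMap_le (hxy : x ≠ y) :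
    |(a / b : ℝ) * wedge x y - wedge (blockMap ha e x) (blockMap ha e y)| ≤ a := by
  obtain ⟨hlow, hupp⟩ := wedge_blockMap_mem_Ico ha hb e hxy
  have hdiv : b * (wedge x y / b) ≤ wedge x y ∧ wedge x y < b * (wedge x y / b) + b :=
    ⟨Nat.mul_div_le _ _, by rw [mul_comm]; exact Nat.lt_div_mul_add hb⟩
  have hbR : (0 : ℝ) < b := by exact_mod_cast hb
  have hlowR : (a : ℝ) * (wedge x y / b : ℕ) ≤ wedge (blockMap ha e x) (blockMap ha e y) := by
    exact_mod_cast hlow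
  have huppR : (wedge (blockMap ha e x) (blockMap ha e y) : ℝ) < a * (wedge x y / b : ℕ) + a := by
    exact_mod_cast hupp
  have hdivR : (b : ℝ) * (wedge x y / b : ℕ) ≤ wedge x y ∧
      (wedge x y : ℝ) < b * (wedge x y / b : ℕ) + b := by exact_mod_cast hdiv
  have hscaled : (a : ℝ) * (wedge x y / b : ℕ) ≤ a / b * wedge x y ∧
      (a / b : ℝ) * wedge x y ≤ a * (wedge x y / b : ℕ) + a := by
    constructor <;> rw [div_mul_eq_mul_div]
    · rw [le_div_iff₀ hbR]; nlinarith
    · rw [div_le_iff₀ hbR]; nlinarith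
  exact abs_le.mpr ⟨by linarith, by linarith⟩

end blockMap

lemma exists_pow_eq_pow_of_log_div_log_eq {N N' : ℕ} (hN : 1 < N) (hN' : 1 < N') {q : ℚ}
    (hq : log N / log N' = q) : ∃ a b : ℕ, 0 < a ∧ 0 < b ∧ N ^ b = N' ^ a := by
  have hlogN : 0 < log N := log_pos (by exact_mod_cast hN)
  have hlogN' : 0 < log N' := log_pos (by exact_mod_cast hN')
  have hq0 : 0 < q := by exact_mod_cast hq ▸ div_pos hlogN hlogN'
  obtain ⟨a, ha⟩ : ∃ a : ℕ, (a : ℤ) = q.num := ⟨_, Int.toNat_of_nonneg (Rat.num_pos.mpr hq0).le⟩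
  have hab : (a / q.den : ℝ) = q := by rw [Rat.cast_def, ← ha, Int.cast_natCast]
  have hlog : log ((N : ℝ) ^ q.den) = log ((N' : ℝ) ^ a) := by
    have hlogq : log N = a / q.den * log N' := by rw [hab, ← hq, div_mul_cancel₀ _ hlogN'.ne']
    rw [log_pow, log_pow, hlogq]
    field_simp
  refine ⟨a, q.den, by exact_mod_cast ha ▸ Rat.num_pos.mpr hq0, q.pos, ?_⟩
  exact_mod_cast log_injOn_pos (Set.mem_Ioi.mpr (by positivity))
    (Set.mem_Ioi.mpr (by positivity)) hlog

/-- If `log N / log N' ∈ ℚ` then `(Ω_N, ρ_r)` and `(Ω_{N'}, ρ_{r'})` are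
strictly Hölder equivalent. -/
theorem holderEquiv_of_rat (N N' : ℕ) (hN : 2 ≤ N) (hN' : 2 ≤ N')
    (r r' : ℝ) (hr0 : 0 < r) (hr1 : r < 1) (hr0' : 0 < r') (hr1' : r' < 1)
    (hrat : ∃ q : ℚ, Real.log N / Real.log N' = q) :
    HolderEquivD (rho N r) (rho N' r') := by
  obtain ⟨q, hq⟩ := hrat
  obtain ⟨a, b, ha, hb, hpow⟩ := exists_pow_eq_pow_of_log_div_log_eq hN hN' hq
  let e : (Fin b → Fin N) ≃ (Fin a → Fin N') :=
    Fintype.equivOfCardEq (by simp only [Fintype.card_fun, Fintype.card_fin, hpow])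
  exact holderEquivD_rho_of_abs_sub_wedge_le hr0 hr1 hr0' hr1' (by positivity)
    (blockMap ha e) (blockMap_bijective ha hb e) fun _ _ => abs_sub_wedge_blockMap_le ha hb e
end

section
/- Let E, F be self-similar sets satisfying the strong separation condition with contraction ratio lists (r_1,...,r_m) and (t_1,...,t_n) respectively, let s = dim_H E / dim_H F, and let E' be a self-similar set with ratio list (r_1^s,...,r_m^s) satisfying the strong separation condition. Then E is strictly Hölder equivalent to F if and only if E' is Lipschitz equivalent to F. (It suffices to prove this at the level of the symbolic spaces (Ω_m, ρ_r), (Ω_n, ρ_t), (Ω_m, ρ_{r^s}).) -/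
/-!
The weights `∏ r (x i) ^ d` make words of a fixed length a probability space when
`∑ r i ^ d = 1`. Stopping every sequence at the first prefix whose ratio product is at most `ε`
cuts this space into cylinders of weight between `(r_min ε) ^ d` and `ε ^ d`, so the largest
`ε`-separated sets of `(Ω, ρ_r)` have between `ε ^ (-d)` and `(r_min ε) ^ (-d)` points.
A map with `C⁻¹ ρ_r ^ s ≤ ρ_t ∘ f` sends `ε`-separated sets to `C⁻¹ ε ^ s`-separated ones,
whence `ε ^ (-dE) ≲ ε ^ (-s dF)` as `ε → 0` and `dE ≤ s dF`; the inverse map gives the reverse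
inequality. So a Hölder exponent must be `dE / dF`, and `ρ_r ^ (dE / dF) = ρ_{r ^ (dE / dF)}`.
-/

open Real

namespace SymbolicSpace

open Finset Filter Topology

variable {N : ℕ}

noncomputable def prefixProd (r : Fin N → ℝ) (x : ℕ → Fin N) (k : ℕ) : ℝ :=
  ∏ i ∈ range k, r (x i)

section PrefixProd

variable {r : Fin N → ℝ} {x y : ℕ → Fin N} {k : ℕ}

lemma prefixProd_zero (r : Fin N → ℝ) (x : ℕ → Fin N) : prefixProd r x 0 = 1 := by
  simp [prefixProd]

lemma prefixProd_succ (r : Fin N → ℝ) (x : ℕ → Fin N) (k : ℕ) :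
    prefixProd r x (k + 1) = prefixProd r x k * r (x k) :=
  prod_range_succ _ _

lemma prefixProd_pos (hr : ∀ i, 0 < r i) (x : ℕ → Fin N) (k : ℕ) : 0 < prefixProd r x k :=
  prod_pos fun _ _ => hr _

lemma prefixProd_antitone (hr : ∀ i, 0 < r i ∧ r i < 1) (x : ℕ → Fin N) :
    Antitone (prefixProd r x) :=
  antitone_nat_of_succ_le fun k => by
    rw [prefixProd_succ]
    exact mul_le_of_le_one_right (prefixProd_pos (fun i => (hr i).1) x k).le (hr _).2.le

lemma prefixProd_congr (h : ∀ i < k, x i = y i) : prefixProd r x k = prefixProd r y k :=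
  prod_congr rfl fun i hi => by rw [h i (mem_range.mp hi)]

lemma prefixProd_rpow (hr : ∀ i, 0 < r i) (x : ℕ → Fin N) (k : ℕ) (d : ℝ) :
    prefixProd r x k ^ d = prefixProd (fun i => r i ^ d) x k :=
  (Real.finsetProd_rpow _ _ (fun _ _ => (hr _).le) d).symm

lemma exists_prefixProd_le (hr : ∀ i, 0 < r i ∧ r i < 1) {ε : ℝ} (hε : 0 < ε) :
    ∃ K, ∀ x : ℕ → Fin N, prefixProd r x K ≤ ε := by
  obtain ⟨R, hR1, hrR⟩ : ∃ R < 1, ∀ i, r i ≤ R := by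
    rcases isEmpty_or_nonempty (Fin N) with hN | hN
    · exact ⟨0, zero_lt_one, isEmptyElim⟩
    · obtain ⟨i₀, hi₀⟩ := Finite.exists_max r
      exact ⟨r i₀, (hr i₀).2, hi₀⟩
  obtain ⟨K, hK⟩ := exists_pow_lt_of_lt_one hε hR1
  refine ⟨K, fun x => le_trans ?_ hK.le⟩
  simpa [prefixProd] using
    prod_le_prod (s := range K) (fun i _ => (hr (x i)).1.le) (fun i _ => hrR (x i))

end PrefixProd

lemma wedge_spec {x y : ℕ → Fin N} (h : x ≠ y) :
    x (wedge x y) ≠ y (wedge x y) ∧ ∀ i < wedge x y, x i = y i := by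
  have hne : {n | x n ≠ y n}.Nonempty := by
    by_contra hc
    exact h (funext fun n => by_contra fun hn => hc ⟨n, hn⟩)
  exact ⟨Nat.sInf_mem hne, fun i hi => by_contra fun hc => (Nat.sInf_le hc).not_gt hi⟩

lemma le_wedge_of_eqOn {x y : ℕ → Fin N} {k : ℕ} (hxy : x ≠ y) (h : ∀ i < k, x i = y i) :
    k ≤ wedge x y :=
  not_lt.mp fun hk => (wedge_spec hxy).1 (h _ hk)

section RhoVec

variable {r : Fin N → ℝ} {x y : ℕ → Fin N}

lemma rhoVec_of_ne (h : x ≠ y) : rhoVec r x y = prefixProd r x (wedge x y) :=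
  if_neg h

lemma rhoVec_nonneg (hr : ∀ i, 0 ≤ r i) (x y : ℕ → Fin N) : 0 ≤ rhoVec r x y := by
  unfold rhoVec
  split_ifs
  exacts [le_rfl, prod_nonneg fun _ _ => hr _]

lemma rhoVec_rpow (hr : ∀ i, 0 < r i) {s : ℝ} (hs : s ≠ 0) (x y : ℕ → Fin N) :
    rhoVec (fun i => r i ^ s) x y = rhoVec r x y ^ s := by
  by_cases h : x = y
  · simp [rhoVec, h, Real.zero_rpow hs]
  · rw [rhoVec_of_ne h, rhoVec_of_ne h, prefixProd_rpow hr]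

lemma rhoVec_comm (x y : ℕ → Fin N) : rhoVec r x y = rhoVec r y x := by
  by_cases h : x = y
  · rw [h]
  · have hw : wedge x y = wedge y x := congrArg sInf (Set.ext fun _ => ne_comm)
    rw [rhoVec_of_ne h, rhoVec_of_ne (Ne.symm h), prefixProd_congr (wedge_spec h).2, hw]

lemma rhoVec_le_prefixProd (hr : ∀ i, 0 < r i ∧ r i < 1) {k : ℕ} (h : ∀ i < k, x i = y i) :
    rhoVec r x y ≤ prefixProd r x k := by
  by_cases hxy : x = y
  · simpa [rhoVec, hxy] using (prefixProd_pos (fun i => (hr i).1) y k).le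
  · rw [rhoVec_of_ne hxy]
    exact prefixProd_antitone hr x (le_wedge_of_eqOn hxy h)

end RhoVec

noncomputable def stopTime (r : Fin N → ℝ) (ε : ℝ) (x : ℕ → Fin N) : ℕ :=
  sInf {k | prefixProd r x k ≤ ε}

section StopTime

variable {r : Fin N → ℝ} {ε : ℝ} {K k : ℕ} {x y : ℕ → Fin N}

lemma stopTime_le_of_prefixProd_le (h : prefixProd r x k ≤ ε) : stopTime r ε x ≤ k :=
  Nat.sInf_le h

lemma lt_prefixProd_of_lt_stopTime (hk : k < stopTime r ε x) : ε < prefixProd r x k :=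
  not_le.mp fun h => (stopTime_le_of_prefixProd_le h).not_gt hk

variable (hK : ∀ x : ℕ → Fin N, prefixProd r x K ≤ ε)
include hK

lemma stopTime_le (x : ℕ → Fin N) : stopTime r ε x ≤ K :=
  stopTime_le_of_prefixProd_le (hK x)

lemma prefixProd_stopTime_le (x : ℕ → Fin N) : prefixProd r x (stopTime r ε x) ≤ ε :=
  Nat.sInf_mem (s := {k | prefixProd r x k ≤ ε}) ⟨K, hK x⟩

lemma stopTime_congr (h : ∀ i < stopTime r ε x, x i = y i) :
    stopTime r ε y = stopTime r ε x := by
  refine le_antisymm (stopTime_le_of_prefixProd_le ?_) (not_lt.mp fun hyx => ?_)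
  · rw [← prefixProd_congr h]
    exact prefixProd_stopTime_le hK x
  · have := lt_prefixProd_of_lt_stopTime hyx
    rw [prefixProd_congr fun i hi => h i (hi.trans hyx)] at this
    exact this.not_ge (prefixProd_stopTime_le hK y)

lemma rhoVec_le_of_eqOn_stopTime (hr : ∀ i, 0 < r i ∧ r i < 1)
    (h : ∀ i < stopTime r ε x, x i = y i) : rhoVec r x y ≤ ε :=
  (rhoVec_le_prefixProd hr h).trans (prefixProd_stopTime_le hK x)

/-- Stopping as soon as the prefix product drops below `ε` overshoots by at most one letter. -/
lemma mul_le_prefixProd_stopTime (hr : ∀ i, 0 ≤ r i) (hε1 : ε < 1) {lo : ℝ}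
    (hlo : 0 ≤ lo) (hlo_le : ∀ i, lo ≤ r i) (x : ℕ → Fin N) :
    lo * ε ≤ prefixProd r x (stopTime r ε x) := by
  obtain ⟨k, hk⟩ : ∃ k, stopTime r ε x = k + 1 := Nat.exists_eq_succ_of_ne_zero fun h0 => by
    have := prefixProd_stopTime_le hK x
    rw [h0, prefixProd_zero] at this
    linarith
  have hεk : ε < prefixProd r x k := lt_prefixProd_of_lt_stopTime (by omega)
  rw [hk, prefixProd_succ, mul_comm (prefixProd r x k)]
  calc lo * ε ≤ lo * prefixProd r x k := mul_le_mul_of_nonneg_left hεk.le hlo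
    _ ≤ r (x k) * prefixProd r x k :=
      mul_le_mul_of_nonneg_right (hlo_le _) (prod_nonneg fun _ _ => hr _)

end StopTime

def cylinder (K k : ℕ) (x : ℕ → Fin N) : Finset (Fin K → Fin N) :=
  Fintype.piFinset fun i => if (i : ℕ) < k then {x i} else univ

section Cylinder

variable {K k : ℕ} {x : ℕ → Fin N} {p : Fin N → ℝ}

lemma mem_cylinder {u : Fin K → Fin N} :
    u ∈ cylinder K k x ↔ ∀ i : Fin K, (i : ℕ) < k → u i = x i := by
  simp only [cylinder, Fintype.mem_piFinset]
  refine forall_congr' fun i => ?_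
  split_ifs with h <;> simp [h]

lemma sum_prod_univ (hp : ∑ j, p j = 1) : ∑ u : Fin K → Fin N, ∏ i, p (u i) = 1 := by
  rw [← Fintype.prod_sum]
  simp [hp]

lemma sum_prod_cylinder (hp : ∑ j, p j = 1) (hk : k ≤ K) (x : ℕ → Fin N) :
    ∑ u ∈ cylinder K k x, ∏ i, p (u i) = prefixProd p x k := by
  rw [cylinder, ← prod_univ_sum]
  have : ∀ i : Fin K, ∑ j ∈ (if (i : ℕ) < k then {x i} else univ), p j =
      if (i : ℕ) < k then p (x i) else 1 := fun i => by split_ifs <;> simp [hp]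
  simp only [this]
  rw [Fin.prod_univ_eq_prod_range (fun i => if i < k then p (x i) else 1), prod_ite,
    prod_const_one, mul_one, prefixProd]
  congr 1
  ext i
  simp only [mem_filter, mem_range]
  omega

end Cylinder

section Counting

variable {r : Fin N → ℝ} {ε d : ℝ}

lemma disjoint_cylinder_stopTime (hr : ∀ i, 0 < r i ∧ r i < 1) {K : ℕ}
    (hK : ∀ x : ℕ → Fin N, prefixProd r x K ≤ ε) {x y : ℕ → Fin N} (hxy : ε < rhoVec r x y) :
    Disjoint (cylinder K (stopTime r ε x) x) (cylinder K (stopTime r ε y) y) := by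
  refine disjoint_left.mpr fun u hux huy => hxy.not_ge ?_
  rw [mem_cylinder] at hux huy
  have agree : ∀ {a b : ℕ → Fin N}, stopTime r ε a ≤ stopTime r ε b →
      (∀ i : Fin K, (i : ℕ) < stopTime r ε a → u i = a i) →
      (∀ i : Fin K, (i : ℕ) < stopTime r ε b → u i = b i) → rhoVec r a b ≤ ε :=
    fun hab ha hb => rhoVec_le_of_eqOn_stopTime hK hr fun i hi => by
      have hiK : i < K := hi.trans_le (stopTime_le hK _)
      rw [← ha ⟨i, hiK⟩ hi, hb ⟨i, hiK⟩ (hi.trans_le hab)]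
  rcases le_total (stopTime r ε x) (stopTime r ε y) with h | h
  · exact agree h hux huy
  · exact rhoVec_comm (r := r) x y ▸ agree h huy hux

theorem card_le_of_pairwise_lt_rhoVec (hr : ∀ i, 0 < r i ∧ r i < 1) (hd : 0 ≤ d)
    (hsum : ∑ j, r j ^ d = 1) (hε : 0 < ε) (hε1 : ε < 1) {lo : ℝ} (hlo : 0 < lo)
    (hlo_le : ∀ i, lo ≤ r i) {A : Finset (ℕ → Fin N)}
    (hA : (A : Set (ℕ → Fin N)).Pairwise fun x y => ε < rhoVec r x y) :
    (#A : ℝ) ≤ (lo * ε) ^ (-d) := by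
  obtain ⟨K, hK⟩ := exists_prefixProd_le hr hε
  have hdisj : (A : Set (ℕ → Fin N)).PairwiseDisjoint fun x => cylinder K (stopTime r ε x) x :=
    fun x hx y hy hxy => disjoint_cylinder_stopTime hr hK (hA hx hy hxy)
  have hweight : ∀ x, (lo * ε) ^ d ≤ ∑ u ∈ cylinder K (stopTime r ε x) x, ∏ i, r (u i) ^ d :=
    fun x => by
      rw [sum_prod_cylinder hsum (stopTime_le hK x), ← prefixProd_rpow fun i => (hr i).1]
      exact Real.rpow_le_rpow (by positivity)
        (mul_le_prefixProd_stopTime hK (fun i => (hr i).1.le) hε1 hlo.le hlo_le x) hd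
  have hcount : (#A : ℝ) * (lo * ε) ^ d ≤ 1 :=
    calc (#A : ℝ) * (lo * ε) ^ d = ∑ _x ∈ A, (lo * ε) ^ d := by rw [sum_const, nsmul_eq_mul]
      _ ≤ ∑ x ∈ A, ∑ u ∈ cylinder K (stopTime r ε x) x, ∏ i, r (u i) ^ d :=
        sum_le_sum fun x _ => hweight x
      _ = ∑ u ∈ A.biUnion fun x => cylinder K (stopTime r ε x) x, ∏ i, r (u i) ^ d :=
        (sum_biUnion hdisj).symm
      _ ≤ ∑ u : Fin K → Fin N, ∏ i, r (u i) ^ d :=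
        sum_le_sum_of_subset_of_nonneg (subset_univ _) fun u _ _ =>
          prod_nonneg fun i _ => Real.rpow_nonneg (hr _).1.le d
      _ = 1 := sum_prod_univ hsum
  rw [Real.rpow_neg (by positivity), ← one_div, le_div_iff₀ (by positivity)]
  exact hcount

noncomputable def truncate (r : Fin N → ℝ) (ε : ℝ) (j₀ : Fin N) (x : ℕ → Fin N) : ℕ → Fin N :=
  fun i => if i < stopTime r ε x then x i else j₀

lemma stopTime_truncate {K : ℕ} (hK : ∀ x : ℕ → Fin N, prefixProd r x K ≤ ε) (j₀ : Fin N)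
    (x : ℕ → Fin N) : stopTime r ε (truncate r ε j₀ x) = stopTime r ε x :=
  stopTime_congr hK fun _ hi => (if_pos hi).symm

lemma lt_rhoVec_truncate {K : ℕ} (hK : ∀ x : ℕ → Fin N, prefixProd r x K ≤ ε) {j₀ : Fin N}
    {x y : ℕ → Fin N} (h : truncate r ε j₀ x ≠ truncate r ε j₀ y) :
    ε < rhoVec r (truncate r ε j₀ x) (truncate r ε j₀ y) := by
  obtain ⟨hne, heq⟩ := wedge_spec h
  rw [rhoVec_of_ne h]
  by_cases hx : wedge (truncate r ε j₀ x) (truncate r ε j₀ y) < stopTime r ε x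
  · exact lt_prefixProd_of_lt_stopTime (by rwa [stopTime_truncate hK])
  by_cases hy : wedge (truncate r ε j₀ x) (truncate r ε j₀ y) < stopTime r ε y
  · rw [prefixProd_congr heq]
    exact lt_prefixProd_of_lt_stopTime (by rwa [stopTime_truncate hK])
  · exact absurd (by simp only [truncate, if_neg hx, if_neg hy]) hne

theorem exists_card_ge_pairwise_lt_rhoVec (hr : ∀ i, 0 < r i ∧ r i < 1) (hd : 0 ≤ d)
    (hsum : ∑ j, r j ^ d = 1) (hε : 0 < ε) :
    ∃ A : Finset (ℕ → Fin N), ε ^ (-d) ≤ #A ∧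
      (A : Set (ℕ → Fin N)).Pairwise fun x y => ε < rhoVec r x y := by
  classical
  obtain ⟨K, hK⟩ := exists_prefixProd_le hr hε
  obtain ⟨j₀, -⟩ := nonempty_of_sum_ne_zero (hsum ▸ one_ne_zero : ∑ j, r j ^ d ≠ 0)
  let g : (Fin K → Fin N) → ℕ → Fin N :=
    fun u => truncate r ε j₀ fun i => if h : i < K then u ⟨i, h⟩ else j₀
  have hcyl : ∀ u, u ∈ cylinder K (stopTime r ε (g u)) (g u) := fun u => by
    rw [mem_cylinder, stopTime_truncate hK]
    intro i hi
    simp [g, truncate, hi]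
  refine ⟨univ.image g, ?_, ?_⟩
  · have hcount : 1 ≤ (#(univ.image g) : ℝ) * ε ^ d :=
      calc (1 : ℝ) = ∑ u : Fin K → Fin N, ∏ i, r (u i) ^ d := (sum_prod_univ hsum).symm
        _ = ∑ a ∈ univ.image g, ∑ u ∈ univ.filter (g · = a), ∏ i, r (u i) ^ d :=
          (sum_fiberwise_of_maps_to (fun u _ => mem_image_of_mem g (mem_univ u)) _).symm
        _ ≤ ∑ a ∈ univ.image g, ∑ u ∈ cylinder K (stopTime r ε a) a, ∏ i, r (u i) ^ d := by
          refine sum_le_sum fun a _ => sum_le_sum_of_subset_of_nonneg ?_ fun u _ _ =>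
            prod_nonneg fun i _ => Real.rpow_nonneg (hr _).1.le d
          intro u hu
          rw [← (mem_filter.mp hu).2]
          exact hcyl u
        _ ≤ ∑ _a ∈ univ.image g, ε ^ d := by
          refine sum_le_sum fun a _ => ?_
          rw [sum_prod_cylinder hsum (stopTime_le hK a), ← prefixProd_rpow fun i => (hr i).1]
          exact Real.rpow_le_rpow (prefixProd_pos (fun i => (hr i).1) a _).le
            (prefixProd_stopTime_le hK a) hd
        _ = (#(univ.image g) : ℝ) * ε ^ d := by rw [sum_const, nsmul_eq_mul]
    rw [Real.rpow_neg hε.le, ← one_div, div_le_iff₀ (by positivity)]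
    exact hcount
  · simp only [coe_image, coe_univ, Set.image_univ]
    rintro _ ⟨u, rfl⟩ _ ⟨v, rfl⟩ huv
    exact lt_rhoVec_truncate hK huv

end Counting

lemma le_of_eventually_rpow_neg_le {a b K : ℝ}
    (h : ∀ᶠ ε in 𝓝[>] 0, ε ^ (-a) ≤ K * ε ^ (-b)) : a ≤ b := by
  by_contra! hba
  have hlarge : ∀ᶠ ε in 𝓝[>] (0 : ℝ), K < ε ^ (b - a) :=
    (tendsto_rpow_neg_nhdsGT_zero (sub_neg.mpr hba)).eventually_gt_atTop K
  obtain ⟨ε, hεK, hε, hε0 : 0 < ε⟩ := (h.and (hlarge.and self_mem_nhdsWithin)).exists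
  have : ε ^ (-a) = ε ^ (b - a) * ε ^ (-b) := by
    rw [← Real.rpow_add hε0]
    ring_nf
  rw [this] at hεK
  exact hεK.not_gt (mul_lt_mul_of_pos_right hε (Real.rpow_pos_of_pos hε0 _))

theorem le_mul_of_inv_mul_rhoVec_rpow_le {M : ℕ} {r : Fin M → ℝ} {t : Fin N → ℝ} {dE dF s C : ℝ}
    (hr : ∀ i, 0 < r i ∧ r i < 1) (ht : ∀ j, 0 < t j ∧ t j < 1) (hdE : 0 ≤ dE) (hdF : 0 ≤ dF)
    (hE : ∑ i, r i ^ dE = 1) (hF : ∑ j, t j ^ dF = 1) (hs : 0 < s) (hC : 0 < C)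
    {f : (ℕ → Fin M) → ℕ → Fin N} (hf : Function.Injective f)
    (hf_le : ∀ a b, C⁻¹ * rhoVec r a b ^ s ≤ rhoVec t (f a) (f b)) :
    dE ≤ s * dF := by
  classical
  have : Nonempty (Fin N) :=
    (nonempty_of_sum_ne_zero (hF ▸ one_ne_zero : ∑ j, t j ^ dF ≠ 0)).to_type
  obtain ⟨jmin, hjmin⟩ := Finite.exists_min t
  have hlo : 0 < t jmin := (ht jmin).1
  have hδ1 : ∀ᶠ ε in 𝓝[>] (0 : ℝ), C⁻¹ * ε ^ s < 1 := by
    have hcont : Tendsto (fun ε : ℝ => C⁻¹ * ε ^ s) (𝓝 0) (𝓝 0) := by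
      simpa [Real.zero_rpow hs.ne'] using
        ((Real.continuous_rpow_const hs.le).tendsto 0).const_mul C⁻¹
    exact (hcont.eventually (gt_mem_nhds one_pos)).filter_mono nhdsWithin_le_nhds
  refine le_of_eventually_rpow_neg_le (K := (t jmin * C⁻¹) ^ (-dF)) ?_
  filter_upwards [hδ1, self_mem_nhdsWithin] with ε hδ1 (hε : 0 < ε)
  obtain ⟨A, hA_card, hA⟩ := exists_card_ge_pairwise_lt_rhoVec hr hdE hE hε
  have hfA : ((A.image f : Finset _) : Set (ℕ → Fin N)).Pairwise
      fun x y => C⁻¹ * ε ^ s < rhoVec t x y := by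
    rw [coe_image, hf.injOn.pairwise_image]
    exact hA.imp fun a b hab => (mul_lt_mul_of_pos_left
      (Real.rpow_lt_rpow hε.le hab hs) (inv_pos.mpr hC)).trans_le (hf_le a b)
  calc ε ^ (-dE) ≤ #A := hA_card
    _ = #(A.image f) := by rw [card_image_of_injective A hf]
    _ ≤ (t jmin * (C⁻¹ * ε ^ s)) ^ (-dF) :=
      card_le_of_pairwise_lt_rhoVec ht hdF hF (by positivity) hδ1 hlo hjmin hfA
    _ = (t jmin * C⁻¹) ^ (-dF) * ε ^ (-(s * dF)) := by
      rw [← mul_assoc, Real.mul_rpow (by positivity) (by positivity),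
        ← Real.rpow_mul hε.le, neg_mul_eq_mul_neg]

lemma inv_mul_rpow_inv_le {a b C s : ℝ} (ha : 0 ≤ a) (hb : 0 ≤ b) (hC : 0 < C) (hs : 0 < s)
    (h : b ≤ C * a ^ s) : (C ^ s⁻¹)⁻¹ * b ^ s⁻¹ ≤ a := by
  rw [inv_mul_le_iff₀ (Real.rpow_pos_of_pos hC _)]
  calc b ^ s⁻¹ ≤ (C * a ^ s) ^ s⁻¹ := Real.rpow_le_rpow hb h (inv_nonneg.mpr hs.le)
    _ = C ^ s⁻¹ * a := by
      rw [Real.mul_rpow hC.le (Real.rpow_nonneg ha _), Real.rpow_rpow_inv ha hs.ne']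

theorem holderExponent_eq {M : ℕ} {r : Fin M → ℝ} {t : Fin N → ℝ} {dE dF s C : ℝ}
    (hr : ∀ i, 0 < r i ∧ r i < 1) (ht : ∀ j, 0 < t j ∧ t j < 1) (hdE : 0 ≤ dE) (hdF : 0 < dF)
    (hE : ∑ i, r i ^ dE = 1) (hF : ∑ j, t j ^ dF = 1) (hs : 0 < s) (hC : 0 < C)
    {f : (ℕ → Fin M) → ℕ → Fin N} (hf : Function.Bijective f)
    (hfC : ∀ a b, C⁻¹ * rhoVec r a b ^ s ≤ rhoVec t (f a) (f b) ∧
      rhoVec t (f a) (f b) ≤ C * rhoVec r a b ^ s) :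
    s = dE / dF := by
  have hE_le : dE ≤ s * dF :=
    le_mul_of_inv_mul_rhoVec_rpow_le hr ht hdE hdF.le hE hF hs hC hf.injective fun a b => (hfC a b).1
  have hF_le : dF ≤ s⁻¹ * dE := by
    let g := Function.surjInv hf.surjective
    refine le_mul_of_inv_mul_rhoVec_rpow_le ht hr hdF.le hdE hF hE (inv_pos.mpr hs)
      (Real.rpow_pos_of_pos hC s⁻¹) (Function.injective_surjInv hf.surjective) fun a b => ?_
    refine inv_mul_rpow_inv_le (rhoVec_nonneg (fun i => (hr i).1.le) _ _)
      (rhoVec_nonneg (fun j => (ht j).1.le) _ _) hC hs ?_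
    simpa only [g, Function.surjInv_eq hf.surjective] using (hfC (g a) (g b)).2
  rw [eq_div_iff hdF.ne']
  exact le_antisymm ((le_inv_mul_iff₀ hs).mp hF_le) hE_le

end SymbolicSpace

open SymbolicSpace in
theorem holderEquiv_iff_lipschitzEquiv_pow_general (m n : ℕ)
    (r : Fin m → ℝ) (t : Fin n → ℝ)
    (hr : ∀ i, 0 < r i ∧ r i < 1) (ht : ∀ j, 0 < t j ∧ t j < 1)
    (dE dF : ℝ) (hdE : 0 < dE) (hdF : 0 < dF)
    (hE : ∑ i, r i ^ dE = 1) (hF : ∑ j, t j ^ dF = 1) :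
    HolderEquivD (rhoVec r) (rhoVec t) ↔
      LipschitzEquivD (rhoVec fun i => r i ^ (dE / dF)) (rhoVec t) := by
  have hs : 0 < dE / dF := div_pos hdE hdF
  have hρ := rhoVec_rpow (fun i => (hr i).1) hs.ne'
  constructor
  · rintro ⟨f, hf, s, C, hs', hC, hfC⟩
    obtain rfl : s = dE / dF := holderExponent_eq hr ht hdE.le hdF hE hF hs' hC hf hfC
    exact ⟨f, hf, C, hC, fun a b => hρ a b ▸ hfC a b⟩
  · rintro ⟨f, hf, C, hC, hfC⟩
    exact ⟨f, hf, dE / dF, C, hs, hC, fun a b => hρ a b ▸ hfC a b⟩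

/-- (Symbolic version.) Let `r`, `t` be ratio lists with similarity
dimensions `dE`, `dF` (i.e. `∑ r_i^{dE} = 1`, `∑ t_j^{dF} = 1`, these being the Hausdorff
dimensions of the corresponding self-similar sets with strong separation), and let
`s = dE/dF`. Then `(Ω_m, ρ_r)` is strictly Hölder equivalent to `(Ω_n, ρ_t)` if and only if
`(Ω_m, ρ_{r^s})` is Lipschitz equivalent to `(Ω_n, ρ_t)`. -/
theorem holderEquiv_iff_lipschitzEquiv_pow (m n : ℕ) (hm : 2 ≤ m) (hn : 2 ≤ n)
    (r : Fin m → ℝ) (t : Fin n → ℝ)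
    (hr : ∀ i, 0 < r i ∧ r i < 1) (ht : ∀ j, 0 < t j ∧ t j < 1)
    (dE dF : ℝ) (hdE : 0 < dE) (hdF : 0 < dF)
    (hE : ∑ i, r i ^ dE = 1) (hF : ∑ j, t j ^ dF = 1) :
    HolderEquivD (rhoVec r) (rhoVec t) ↔
      LipschitzEquivD (rhoVec fun i => r i ^ (dE / dF)) (rhoVec t) :=
  holderEquiv_iff_lipschitzEquiv_pow_general m n r t hr ht dE dF hdE hdF hE hF
end

section
/- Let E ∈ 𝒮(r_1, r_2) and F ∈ 𝒮(t_1, t_2) with r_1 ≥ r_2 and t_1 ≥ t_2, and suppose log r_1 / log r_2 ∉ ℚ. Assume Rao–Ruan–Wang's theorem: two such self-similar sets with irrational ratio exponent are Lipschitz equivalent iff their ratio lists coincide. Then E and F are strictly Hölder equivalent if and only if log r_1 / log t_1 = log r_2 / log t_2. -/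
open Real

/-! A Hölder equivalence of exponent `s` from `ρ_r` to `ρ_t` is the same as a Lipschitz equivalence
from `ρ_{r^s}` to `ρ_t`, and `log r₁ / log r₂` is unchanged when `r` is replaced by `r^s`. Hence, by
Rao–Ruan–Wang, `E` and `F` are Hölder equivalent iff `r₁^s = t₁` and `r₂^s = t₂` for some `s > 0`,
that is, iff `log t₁ / log r₁ = log t₂ / log r₂`. -/

lemma div_eq_div_iff_exists_pos_mul {K : Type*} [Field K] [LinearOrder K] [IsStrictOrderedRing K]
    {x₁ x₂ y₁ y₂ : K} (hx₁ : x₁ < 0) (hx₂ : x₂ < 0)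
    (hy₁ : y₁ < 0) (hy₂ : y₂ < 0) :
    x₁ / y₁ = x₂ / y₂ ↔ ∃ s : K, 0 < s ∧ s * x₁ = y₁ ∧ s * x₂ = y₂ := by
  constructor
  · intro h
    refine ⟨y₁ / x₁, div_pos_of_neg_of_neg hy₁ hx₁, div_mul_cancel₀ _ hx₁.ne, ?_⟩
    rw [div_eq_div_iff hy₁.ne hy₂.ne] at h
    rw [div_mul_eq_mul_div, div_eq_iff hx₁.ne]
    linarith
  · rintro ⟨s, hs, rfl, rfl⟩
    rw [mul_comm s x₁, mul_comm s x₂, div_mul_cancel_left₀ hx₁.ne,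
      div_mul_cancel_left₀ hx₂.ne]

lemma rpow_eq_iff_mul_log_eq {r t s : ℝ} (hr : 0 < r) (ht : 0 < t) :
    r ^ s = t ↔ s * log r = log t := by
  rw [← log_rpow hr]
  exact log_injOn_pos.eq_iff (rpow_pos_of_pos hr s) ht |>.symm

lemma log_rpow_div_log_rpow {a b s : ℝ} (ha : 0 < a) (hb : 0 < b) (hs : s ≠ 0) :
    log (a ^ s) / log (b ^ s) = log a / log b := by
  rw [log_rpow ha, log_rpow hb, mul_div_mul_left _ _ hs]

lemma rhoVec_rpow {N : ℕ} {r : Fin N → ℝ} (hr : ∀ i, 0 ≤ r i) {s : ℝ} (hs : 0 < s)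
    (x y : ℕ → Fin N) :
    rhoVec (fun i => r i ^ s) x y = rhoVec r x y ^ s := by
  unfold rhoVec
  split_ifs
  · exact (zero_rpow hs.ne').symm
  · exact finsetProd_rpow _ _ (fun i _ => hr (x i)) s

lemma holderEquivD_iff_exists_lipschitzEquivD_rpow {X Y : Type*} (dX : X → X → ℝ)
    (dY : Y → Y → ℝ) :
    HolderEquivD dX dY ↔ ∃ s : ℝ, 0 < s ∧ LipschitzEquivD (fun a b => dX a b ^ s) dY := by
  constructor
  · rintro ⟨f, hf, s, C, hs, hC, hbd⟩
    exact ⟨s, hs, f, hf, C, hC, hbd⟩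
  · rintro ⟨s, hs, f, hf, C, hC, hbd⟩
    exact ⟨f, hf, s, C, hs, hC, hbd⟩

lemma holderEquivD_rhoVec_iff {N : ℕ} {Y : Type*} {r : Fin N → ℝ} (hr : ∀ i, 0 ≤ r i)
    (dY : Y → Y → ℝ) :
    HolderEquivD (rhoVec r) dY ↔
      ∃ s : ℝ, 0 < s ∧ LipschitzEquivD (rhoVec fun i => r i ^ s) dY := by
  rw [holderEquivD_iff_exists_lipschitzEquivD_rpow]
  refine exists_congr fun s => and_congr_right fun hs => ?_
  simp only [funext₂ (rhoVec_rpow hr hs)]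

lemma vecTwo_rpow (a b s : ℝ) : (fun i => ![a, b] i ^ s) = ![a ^ s, b ^ s] := by
  funext i
  fin_cases i <;> rfl

/-- (Symbolic version of two-branch self-similar sets, strong separation.)
Let `r_1 ≥ r_2`, `t_1 ≥ t_2` be in `(0,1)` with `log r_1 / log r_2 ∉ ℚ`. Assuming the
Rao–Ruan–Wang theorem (in the irrational case, Lipschitz equivalence holds iff the ratio
lists coincide), `E` and `F` are strictly Hölder equivalent if and only if
`log r_1 / log t_1 = log r_2 / log t_2`. -/
theorem two_branch_irrational (r₁ r₂ t₁ t₂ : ℝ)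
    (hr₁ : 0 < r₁ ∧ r₁ < 1) (hr₂ : 0 < r₂ ∧ r₂ < 1)
    (ht₁ : 0 < t₁ ∧ t₁ < 1) (ht₂ : 0 < t₂ ∧ t₂ < 1)
    (hr : r₂ ≤ r₁) (ht : t₂ ≤ t₁)
    (hirr : ∀ q : ℚ, Real.log r₁ / Real.log r₂ ≠ q)
    (hRRW : ∀ a b c e : ℝ, 0 < a → a < 1 → 0 < b → b < 1 → 0 < c → c < 1 → 0 < e → e < 1 →
      b ≤ a → e ≤ c → (∀ q : ℚ, Real.log a / Real.log b ≠ q) →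
      (LipschitzEquivD (rhoVec ![a, b]) (rhoVec ![c, e]) ↔ (a = c ∧ b = e))) :
    HolderEquivD (rhoVec ![r₁, r₂]) (rhoVec ![t₁, t₂]) ↔
      Real.log r₁ / Real.log t₁ = Real.log r₂ / Real.log t₂ := by
  have hnonneg : ∀ i, 0 ≤ ![r₁, r₂] i := fun i => by fin_cases i <;> simp [hr₁.1.le, hr₂.1.le]
  rw [holderEquivD_rhoVec_iff hnonneg, div_eq_div_iff_exists_pos_mul (log_neg hr₁.1 hr₁.2)
    (log_neg hr₂.1 hr₂.2) (log_neg ht₁.1 ht₁.2) (log_neg ht₂.1 ht₂.2)]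
  refine exists_congr fun s => and_congr_right fun hs => ?_
  rw [vecTwo_rpow, ← rpow_eq_iff_mul_log_eq hr₁.1 ht₁.1, ← rpow_eq_iff_mul_log_eq hr₂.1 ht₂.1]
  refine hRRW _ _ _ _ (rpow_pos_of_pos hr₁.1 s) (rpow_lt_one hr₁.1.le hr₁.2 hs)
    (rpow_pos_of_pos hr₂.1 s) (rpow_lt_one hr₂.1.le hr₂.2 hs) ht₁.1 ht₁.2 ht₂.1 ht₂.2
    (rpow_le_rpow hr₂.1.le hr hs.le) ht fun q => ?_
  rw [log_rpow_div_log_rpow hr₁.1 hr₂.1 hs.ne']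
  exact hirr q
end
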